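/- The family {F(d) : d ∈ D} is pairwise disjoint, where F(d) = cl U(d) \ ⋃_{e ∈ D_d} W(e). -/

import Mathlib

open Set Topology

/-- The Cantor space `2^ℕ`, with coordinates indexed by the positive integers. -/
abbrev Cant : Type := ℕ+ → Bool

/-- The support of a point of the Cantor space, as a set of (positive) natural numbers. -/
def ksupp (x : Cant) : Set ℕ := {i | ∃ h : 0 < i, x ⟨i, h⟩ = true}

/-- The plane. -/
abbrev Plane : Type := EuclideanSpace ℝ (Fin 2)

/-- `N_d = max supp d` (with `sSup ∅ = 0` for the zero point). -/
noncomputable def Nd (d : Cant) : ℕ := sSup (ksupp d)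

/-- The basic clopen set `V_d = {y : y(i) = d(i) for 1 ≤ i ≤ N_d}`. -/
noncomputable def Vd (d : Cant) : Set Cant :=
  {y | ∀ i : ℕ+, (i : ℕ) ≤ Nd d → y i = d i}

/-- The set `D_d` of children of `d ∈ D`: the points of `D_{k_d+1}` agreeing with `d`
on the coordinates `1, …, N_d`. -/
noncomputable def Dch (d : Cant) : Set Cant :=
  {e | (ksupp e).Finite ∧ (ksupp e).ncard = (ksupp d).ncard + 1 ∧
    ∀ i : ℕ+, (i : ℕ) ≤ Nd d → e i = d i}

/-- The ball `W(d) = B(σ(d), 2^{−ℓ(d)})`. -/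
noncomputable def Wb (σ : Cant → Plane) (ℓ : Cant → ℕ) (d : Cant) : Set Plane :=
  Metric.ball (σ d) ((2 : ℝ) ^ (-(ℓ d : ℤ)))

/-- The ball `U(d) = B(σ(d), 2^{−ℓ(d)−1})`. -/
noncomputable def Ub (σ : Cant → Plane) (ℓ : Cant → ℕ) (d : Cant) : Set Plane :=
  Metric.ball (σ d) ((2 : ℝ) ^ (-(ℓ d : ℤ) - 1))

/-- The resulting Cantor set `K = ⋂_n cl (⋃ {W(d) : d ∈ D_n})`. -/
noncomputable def Kset (σ : Cant → Plane) (ℓ : Cant → ℕ) : Set Plane :=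
  ⋂ n : ℕ, closure (⋃ d ∈ {d : Cant | (ksupp d).Finite ∧ (ksupp d).ncard = n}, Wb σ ℓ d)

/-- The closed set `F(d) = cl U(d) \ ⋃_{e ∈ D_d} W(e)`. -/
noncomputable def Fd (σ : Cant → Plane) (ℓ : Cant → ℕ) (d : Cant) : Set Plane :=
  closure (Ub σ ℓ d) \ ⋃ e ∈ Dch d, Wb σ ℓ e

/-- The three conditions imposed on the maps `σ : D → ℝ²` and `ℓ : D → ω`:
(1) `⟨σ(e) : e ∈ D_d⟩` converges to `σ(d)` (in the sense that `σ(e)` is close to `σ(d)`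
    once the added support element `N_e` of the child `e` is large);
(2) `cl W(e) ⊆ U(d) \ {σ(d)}` whenever `e ∈ D_d`;
(3) `{cl W(d) : d ∈ D_n}` is pairwise disjoint for every `n`. -/
def CantorConds (σ : Cant → Plane) (ℓ : Cant → ℕ) : Prop :=
  (∀ d : Cant, (ksupp d).Finite → ∀ ε > (0 : ℝ), ∃ M : ℕ, ∀ e ∈ Dch d,
      M ≤ Nd e → dist (σ e) (σ d) < ε) ∧
  (∀ d : Cant, (ksupp d).Finite → ∀ e ∈ Dch d,
      closure (Wb σ ℓ e) ⊆ Ub σ ℓ d \ {σ d}) ∧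
  (∀ n : ℕ, ∀ d e : Cant, (ksupp d).Finite → (ksupp d).ncard = n →
      (ksupp e).Finite → (ksupp e).ncard = n → d ≠ e →
      Disjoint (closure (Wb σ ℓ d)) (closure (Wb σ ℓ e)))

/-!
Every `e ∈ D` with `|supp e| = n` has, for each `k < n`, an ancestor `a ∈ D_k` and a child `c`
of `a` on the way down to `e`; condition (2), applied along the chain of parents, gives
`cl U(e) ⊆ W(c) ⊆ cl W(a)`. So if `|supp d| < |supp e|`, either `d = a`, and then `F(d)` misses
`W(c) ⊇ F(e)` by definition of `F`, or `d ≠ a` and condition (3) separates `cl W(d) ⊇ F(d)` from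
`cl W(a) ⊇ F(e)`. Points with supports of equal size are separated by (3) directly.
-/

noncomputable def par (e : Cant) : Cant := fun i => if (i : ℕ) = Nd e then false else e i

lemma ksupp_par (e : Cant) : ksupp (par e) = ksupp e \ {Nd e} := by
  ext i
  simp only [ksupp, par, Set.mem_ofPred_eq, Set.mem_sdiff, Set.mem_singleton_iff]
  constructor
  · rintro ⟨hi, hpar⟩
    split_ifs at hpar with htop
    exact ⟨⟨hi, hpar⟩, htop⟩
  · rintro ⟨⟨hi, he⟩, htop⟩
    exact ⟨hi, by simpa [htop] using he⟩

lemma Nd_mem_ksupp {e : Cant} (hf : (ksupp e).Finite) (hne : (ksupp e).Nonempty) :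
    Nd e ∈ ksupp e :=
  Nat.sSup_mem hne hf.bddAbove

lemma ksupp_par_finite {e : Cant} (hf : (ksupp e).Finite) : (ksupp (par e)).Finite := by
  rw [ksupp_par]
  exact hf.sdiff

lemma ncard_ksupp_par_add_one {e : Cant} (hf : (ksupp e).Finite) (hne : (ksupp e).Nonempty) :
    (ksupp (par e)).ncard + 1 = (ksupp e).ncard := by
  rw [ksupp_par]
  exact Set.ncard_sdiff_singleton_add_one (Nd_mem_ksupp hf hne) hf

lemma Nd_par_lt {e : Cant} (hf : (ksupp e).Finite) (hne : (ksupp e).Nonempty) :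
    Nd (par e) < Nd e := by
  rcases (ksupp (par e)).eq_empty_or_nonempty with hempty | hne'
  · rw [Nd, hempty, csSup_empty]
    exact (Nd_mem_ksupp hf hne).1
  · have hmem := Nd_mem_ksupp (ksupp_par_finite hf) hne'
    rw [ksupp_par] at hmem
    exact (le_csSup hf.bddAbove hmem.1).lt_of_ne hmem.2

lemma mem_Dch_par {e : Cant} (hf : (ksupp e).Finite) (hne : (ksupp e).Nonempty) :
    e ∈ Dch (par e) := by
  refine ⟨hf, (ncard_ksupp_par_add_one hf hne).symm, fun i hi => ?_⟩
  have hlt := Nd_par_lt hf hne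
  exact (if_neg (by omega : (i : ℕ) ≠ Nd e)).symm

section Balls

variable {σ : Cant → Plane} {ℓ : Cant → ℕ}

lemma closure_Ub_subset_Wb (d : Cant) : closure (Ub σ ℓ d) ⊆ Wb σ ℓ d :=
  Metric.closure_ball_subset_closedBall.trans
    (Metric.closedBall_subset_ball (zpow_lt_zpow_right₀ one_lt_two (by omega)))

lemma Fd_subset_closure_Ub (d : Cant) : Fd σ ℓ d ⊆ closure (Ub σ ℓ d) :=
  Set.sdiff_subset

lemma Fd_subset_closure_Wb (d : Cant) : Fd σ ℓ d ⊆ closure (Wb σ ℓ d) :=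
  (Fd_subset_closure_Ub d).trans ((closure_Ub_subset_Wb d).trans subset_closure)

lemma disjoint_Fd_Wb_of_mem_Dch {d c : Cant} (hc : c ∈ Dch d) : Disjoint (Fd σ ℓ d) (Wb σ ℓ c) :=
  Set.disjoint_left.mpr fun _ hx hxc => hx.2 (Set.mem_biUnion hc hxc)

variable (hc : CantorConds σ ℓ)
include hc

lemma CantorConds.Wb_subset_closure_Ub {d e : Cant} (hd : (ksupp d).Finite) (he : e ∈ Dch d) :
    Wb σ ℓ e ⊆ closure (Ub σ ℓ d) :=
  subset_closure.trans ((hc.2.1 d hd e he).trans (Set.sdiff_subset.trans subset_closure))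

lemma CantorConds.exists_closure_Ub_subset_Wb_child {e : Cant} (he : (ksupp e).Finite) {k : ℕ}
    (hk : k < (ksupp e).ncard) :
    ∃ a c : Cant, (ksupp a).Finite ∧ (ksupp a).ncard = k ∧ c ∈ Dch a ∧
      closure (Ub σ ℓ e) ⊆ Wb σ ℓ c := by
  induction hn : (ksupp e).ncard generalizing e with
  | zero => omega
  | succ n ih =>
    have hne : (ksupp e).Nonempty := Set.nonempty_of_ncard_ne_zero (by omega)
    have hpar : (ksupp (par e)).ncard = n := by
      have := ncard_ksupp_par_add_one he hne
      omega
    have hchild := mem_Dch_par he hne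
    rcases (Nat.lt_succ_iff.mp (hn ▸ hk)).eq_or_lt with rfl | hlt
    · exact ⟨par e, e, ksupp_par_finite he, hpar, hchild, closure_Ub_subset_Wb e⟩
    · obtain ⟨a, c, ha, hak, hca, hsub⟩ := ih (ksupp_par_finite he) (hpar ▸ hlt) hpar
      refine ⟨a, c, ha, hak, hca, ?_⟩
      calc closure (Ub σ ℓ e) ⊆ Wb σ ℓ e := closure_Ub_subset_Wb e
        _ ⊆ closure (Ub σ ℓ (par e)) := hc.Wb_subset_closure_Ub (ksupp_par_finite he) hchild
        _ ⊆ Wb σ ℓ c := hsub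

lemma CantorConds.disjoint_Fd_of_ncard_eq {d e : Cant} (hd : (ksupp d).Finite)
    (he : (ksupp e).Finite) (hde : d ≠ e) (hn : (ksupp d).ncard = (ksupp e).ncard) :
    Disjoint (Fd σ ℓ d) (Fd σ ℓ e) :=
  (hc.2.2 _ d e hd rfl he hn.symm hde).mono (Fd_subset_closure_Wb d) (Fd_subset_closure_Wb e)

lemma CantorConds.disjoint_Fd_of_ncard_lt {d e : Cant} (hd : (ksupp d).Finite)
    (he : (ksupp e).Finite) (hlt : (ksupp d).ncard < (ksupp e).ncard) :
    Disjoint (Fd σ ℓ d) (Fd σ ℓ e) := by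
  obtain ⟨a, c, ha, hak, hca, hsub⟩ := hc.exists_closure_Ub_subset_Wb_child he hlt
  have hFe : Fd σ ℓ e ⊆ Wb σ ℓ c := (Fd_subset_closure_Ub e).trans hsub
  by_cases had : d = a
  · subst had
    exact (disjoint_Fd_Wb_of_mem_Dch hca).mono_right hFe
  · have hca' : Wb σ ℓ c ⊆ closure (Wb σ ℓ a) :=
      (hc.Wb_subset_closure_Ub ha hca).trans ((closure_Ub_subset_Wb a).trans subset_closure)
    exact (hc.2.2 _ d a hd rfl ha hak had).mono (Fd_subset_closure_Wb d) (hFe.trans hca')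

end Balls

/-- The family `{F(d) : d ∈ D}` is pairwise disjoint, where
`F(d) = cl U(d) \ ⋃_{e ∈ D_d} W(e)`. -/
theorem Fd_pairwise_disjoint (σ : Cant → Plane) (ℓ : Cant → ℕ)
    (hc : CantorConds σ ℓ) :
    ∀ d e : Cant, (ksupp d).Finite → (ksupp e).Finite → d ≠ e →
      Disjoint (Fd σ ℓ d) (Fd σ ℓ e) := by
  intro d e hd he hde
  rcases lt_trichotomy (ksupp d).ncard (ksupp e).ncard with hlt | heq | hgt
  · exact hc.disjoint_Fd_of_ncard_lt hd he hlt
  · exact hc.disjoint_Fd_of_ncard_eq hd he hde heq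
  · exact (hc.disjoint_Fd_of_ncard_lt he hd hgt).symm
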